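/- Let M ≥ 1 and let a_0, …, a_M be real numbers with P(t) = Σ_{k=0}^{M} a_k t^k, and define the Bernstein coefficients b_j = Σ_{k=0}^{j} a_k · C(j,k)/C(M,k) for j = 0, …, M, where C(n,k) denotes the binomial coefficient. Let d be the maximal gap between consecutive elements of the b_j when sorted in increasing order, and let g : ℝ → ℝ be twice differentiable on [min_j b_j, max_j b_j] with |g''(x)| ≤ C there. Then for every t ∈ [0,1], (min_{0 ≤ j ≤ M} g(b_j)) − C·d²/2 ≤ g(P(t)) ≤ (max_{0 ≤ j ≤ M} g(b_j)) + C·d²/2. -/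

import Mathlib

/-!
In the Bernstein basis `P(t) = ∑ⱼ bⱼ Bⱼ(t)`, and for `t ∈ [0,1]` the weights `Bⱼ(t)` are
nonnegative and sum to one, so `P(t)` lies in `[min bⱼ, max bⱼ]`, hence between two consecutive
sorted coefficients `p ≤ P(t) ≤ q` with `q - p ≤ d`. Since `|g''| ≤ C`, the functions
`g ± (C/2)(y - p)(y - q)` are convex resp. concave, so on `[p, q]` they are bounded by their values
at the endpoints; thus `g(P(t))` exceeds the range of `g(p), g(q)` by at most
`(C/2)(P(t) - p)(q - P(t)) ≤ C d²/2`.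
-/

open Finset Polynomial

namespace bernsteinPolynomial

theorem sum_choose_smul {R : Type*} [CommRing R] (n k : ℕ) :
    ∑ ν ∈ range (n + 1), ν.choose k • bernsteinPolynomial R n ν = n.choose k • X ^ k := by
  rcases lt_or_ge n k with hnk | hkn
  · rw [Nat.choose_eq_zero_of_lt hnk, zero_smul]
    refine sum_eq_zero fun ν hν => ?_
    rw [Nat.choose_eq_zero_of_lt (by have := mem_range.mp hν; omega), zero_smul]
  -- only the terms `ν = k + i` survive, and `C(k+i,k) C(n,k+i) = C(n,k) C(n-k,i)`
  have hterm (i : ℕ) : (k + i).choose k • bernsteinPolynomial R n (k + i)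
      = n.choose k • X ^ k * bernsteinPolynomial R (n - k) i := by
    rcases lt_or_ge (n - k) i with hi | hi
    · rw [eq_zero_of_lt R (by omega), eq_zero_of_lt R hi]; simp
    have hchoose : n.choose (k + i) * (k + i).choose k = n.choose k * (n - k).choose i := by
      simpa using Nat.choose_mul (n := n) (Nat.le_add_right k i)
    have hcast : ((n.choose (k + i) : ℕ) : R[X]) * ((k + i).choose k : ℕ)
        = (n.choose k : ℕ) * ((n - k).choose i : ℕ) := by
      rw [← Nat.cast_mul, ← Nat.cast_mul, hchoose]
    simp only [bernsteinPolynomial, nsmul_eq_mul, Nat.sub_sub, pow_add]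
    linear_combination (X ^ k * X ^ i * (1 - X) ^ (n - (k + i)) : R[X]) * hcast
  rw [show n + 1 = k + (n - k + 1) by omega, sum_range_add,
    sum_eq_zero fun ν hν => by rw [Nat.choose_eq_zero_of_lt (mem_range.mp hν), zero_smul],
    zero_add, sum_congr rfl fun i _ => hterm i, ← mul_sum, sum, mul_one]

theorem eval_nonneg {R : Type*} [CommRing R] [PartialOrder R] [IsOrderedRing R] (n ν : ℕ) {t : R}
    (ht : t ∈ Set.Icc 0 1) : 0 ≤ (bernsteinPolynomial R n ν).eval t := by
  obtain ⟨h₀, h₁⟩ := ht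
  have : 0 ≤ 1 - t := sub_nonneg.mpr h₁
  simp only [bernsteinPolynomial, eval_mul, eval_pow, eval_natCast, eval_X, eval_sub, eval_one]
  positivity

theorem sum_eval_smul_mem {E : Type*} [AddCommGroup E] [Module ℝ E] {s : Set E}
    (hs : Convex ℝ s) {n : ℕ} {z : ℕ → E} (hz : ∀ ν ≤ n, z ν ∈ s) {t : ℝ} (ht : t ∈ Set.Icc 0 1) :
    ∑ ν ∈ range (n + 1), (bernsteinPolynomial ℝ n ν).eval t • z ν ∈ s :=
  hs.sum_mem (fun ν _ => eval_nonneg n ν ht) (by rw [← eval_finsetSum, sum, eval_one])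
    fun ν hν => hz ν (Nat.lt_succ_iff.mp (mem_range.mp hν))

end bernsteinPolynomial

section BernsteinCoeff

variable {K : Type*} [Field K]

def bernsteinCoeff (a : ℕ → K) (n j : ℕ) : K :=
  ∑ k ∈ range (j + 1), a k * (j.choose k / n.choose k)

theorem bernsteinCoeff_eq_sum_range (a : ℕ → K) {n j : ℕ} (hj : j ≤ n) :
    bernsteinCoeff a n j = ∑ k ∈ range (n + 1), a k * (j.choose k / n.choose k) :=
  sum_subset (range_subset_range.mpr (by omega)) fun k _ hk => by
    rw [Nat.choose_eq_zero_of_lt (by simpa using hk), Nat.cast_zero, zero_div, mul_zero]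

theorem sum_bernsteinCoeff_smul_bernsteinPolynomial [CharZero K] (a : ℕ → K) (n : ℕ) :
    ∑ j ∈ range (n + 1), bernsteinCoeff a n j • bernsteinPolynomial K n j
      = ∑ k ∈ range (n + 1), a k • X ^ k := by
  have hcoeff (j : ℕ) (hj : j ∈ range (n + 1)) :
      bernsteinCoeff a n j • bernsteinPolynomial K n j
        = ∑ k ∈ range (n + 1), (a k / n.choose k) • j.choose k • bernsteinPolynomial K n j := by
    rw [bernsteinCoeff_eq_sum_range a (Nat.lt_succ_iff.mp (mem_range.mp hj)), sum_smul]
    refine sum_congr rfl fun k _ => ?_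
    rw [← Nat.cast_smul_eq_nsmul K, smul_smul]
    ring_nf
  rw [sum_congr rfl hcoeff, sum_comm]
  refine sum_congr rfl fun k hk => ?_
  have hchoose : (n.choose k : K) ≠ 0 :=
    Nat.cast_ne_zero.mpr (Nat.choose_pos (Nat.lt_succ_iff.mp (mem_range.mp hk))).ne'
  rw [← smul_sum, bernsteinPolynomial.sum_choose_smul, ← Nat.cast_smul_eq_nsmul K, smul_smul,
    div_mul_cancel₀ _ hchoose]

end BernsteinCoeff

theorem sum_mul_pow_mem_of_bernsteinCoeff_mem {s : Set ℝ} (hs : Convex ℝ s) (a : ℕ → ℝ) {n : ℕ}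
    (h : ∀ j ≤ n, bernsteinCoeff a n j ∈ s) {t : ℝ} (ht : t ∈ Set.Icc 0 1) :
    ∑ k ∈ range (n + 1), a k * t ^ k ∈ s := by
  have hrep := congrArg (eval t) (sum_bernsteinCoeff_smul_bernsteinPolynomial a n)
  simp only [eval_finsetSum, eval_smul, eval_pow, eval_X, smul_eq_mul] at hrep
  rw [← hrep]
  simpa only [smul_eq_mul, mul_comm] using bernsteinPolynomial.sum_eval_smul_mem hs h ht

theorem Fin.exists_castSucc_le_le_succ {α : Type*} [LinearOrder α] {n : ℕ} (c : Fin (n + 2) → α)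
    {x : α} (h₀ : c 0 ≤ x) (h₁ : x ≤ c (Fin.last _)) :
    ∃ i : Fin (n + 1), c i.castSucc ≤ x ∧ x ≤ c i.succ := by
  induction n with
  | zero => exact ⟨0, h₀, h₁⟩
  | succ n ih =>
    rcases le_total x (c 1) with hx | hx
    · exact ⟨0, h₀, hx⟩
    · obtain ⟨i, hi⟩ := ih (fun i => c i.succ) hx h₁
      exact ⟨i.succ, hi⟩

theorem Finset.inf'_univ_eq_of_monotone_comp_perm {α : Type*} [LinearOrder α] {n : ℕ}
    {b : Fin (n + 1) → α} {σ : Equiv.Perm (Fin (n + 1))} (hσ : Monotone (b ∘ σ)) :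
    univ.inf' univ_nonempty b = b (σ 0) :=
  le_antisymm (inf'_le _ (mem_univ _)) <| le_inf' _ _ fun j _ => by
    simpa using hσ (Fin.zero_le (σ.symm j))

theorem Finset.sup'_univ_eq_of_monotone_comp_perm {α : Type*} [LinearOrder α] {n : ℕ}
    {b : Fin (n + 1) → α} {σ : Equiv.Perm (Fin (n + 1))} (hσ : Monotone (b ∘ σ)) :
    univ.sup' univ_nonempty b = b (σ (Fin.last n)) :=
  le_antisymm (sup'_le _ _ fun j _ => by simpa using hσ (Fin.le_last (σ.symm j)))
    (le_sup' _ (mem_univ _))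

theorem Convex.le_max_add_of_neg_le_deriv2 {D : Set ℝ} (hD : Convex ℝ D) {g g' g'' : ℝ → ℝ}
    {C : ℝ} (hg : ∀ x ∈ D, HasDerivWithinAt g (g' x) D x)
    (hg' : ∀ x ∈ D, HasDerivWithinAt g' (g'' x) D x) (hC : ∀ x ∈ D, -C ≤ g'' x)
    {p q x : ℝ} (hp : p ∈ D) (hq : q ∈ D) (hx : x ∈ Set.Icc p q) :
    g x ≤ max (g p) (g q) + C / 2 * ((x - p) * (q - x)) := by
  -- `φ'' = g'' + C ≥ 0`, so `φ x ≤ max (φ p) (φ q) = max (g p) (g q)`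
  set φ : ℝ → ℝ := fun y => g y + C / 2 * ((y - p) * (y - q))
  have hφ (y) (hy : y ∈ D) : HasDerivWithinAt φ (g' y + C / 2 * (2 * y - p - q)) D y := by
    refine ((hg y hy).add ((((hasDerivWithinAt_id y D).sub_const p).mul
      ((hasDerivWithinAt_id y D).sub_const q)).const_mul (C / 2))).congr_deriv ?_
    simp only [id]; ring
  have hφ' (y) (hy : y ∈ D) :
      HasDerivWithinAt (fun y => g' y + C / 2 * (2 * y - p - q)) (g'' y + C) D y := by
    refine ((hg' y hy).add ((((hasDerivWithinAt_id y D).const_mul 2).sub_const p).sub_const q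
      |>.const_mul (C / 2))).congr_deriv ?_
    ring
  have hconvex : ConvexOn ℝ D φ :=
    convexOn_of_hasDerivWithinAt2_nonneg hD (fun y hy => (hφ y hy).continuousWithinAt)
      (fun y hy => (hφ y (interior_subset hy)).mono interior_subset)
      (fun y hy => (hφ' y (interior_subset hy)).mono interior_subset)
      (fun y hy => by linarith [hC y (interior_subset hy)])
  have := hconvex.le_on_segment hp hq (by rwa [segment_eq_Icc (hx.1.trans hx.2)])
  simp only [φ, sub_self, zero_mul, mul_zero, add_zero] at this
  linarith

theorem Convex.min_sub_le_of_deriv2_le {D : Set ℝ} (hD : Convex ℝ D) {g g' g'' : ℝ → ℝ}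
    {C : ℝ} (hg : ∀ x ∈ D, HasDerivWithinAt g (g' x) D x)
    (hg' : ∀ x ∈ D, HasDerivWithinAt g' (g'' x) D x) (hC : ∀ x ∈ D, g'' x ≤ C)
    {p q x : ℝ} (hp : p ∈ D) (hq : q ∈ D) (hx : x ∈ Set.Icc p q) :
    min (g p) (g q) - C / 2 * ((x - p) * (q - x)) ≤ g x := by
  have := hD.le_max_add_of_neg_le_deriv2 (g := fun y => -g y) (g' := fun y => -g' y)
    (fun y hy => (hg y hy).neg) (fun y hy => (hg' y hy).neg) (fun y hy => neg_le_neg (hC y hy))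
    hp hq hx
  rw [max_neg_neg] at this
  linarith

/-- Paper's Theorem 1: a twice-differentiable constraint `g` evaluated along the
polynomial trajectory `P(t) = Σ aₖ tᵏ` over `[0,1]` is enclosed between the extrema of
`g` over the Bernstein coefficients `bⱼ` of `P`, enlarged by `C·d²/2`, where `d` is the
maximal gap between consecutive sorted Bernstein coefficients and `|g''| ≤ C` on
`[min bⱼ, max bⱼ]`. -/
theorem stmt_1 (M : ℕ) (hM : 1 ≤ M) (a : ℕ → ℝ) (b : Fin (M + 1) → ℝ)
    (hb : ∀ j : Fin (M + 1), b j = ∑ k ∈ Finset.range ((j : ℕ) + 1),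
      a k * (((j : ℕ).choose k : ℝ) / (M.choose k : ℝ)))
    (σ : Equiv.Perm (Fin (M + 1))) (hσ : Monotone (fun i => b (σ i)))
    (d : ℝ)
    (hd : d = Finset.univ.sup' (Finset.univ_nonempty_iff.mpr ⟨⟨0, hM⟩⟩)
      (fun i : Fin M => b (σ i.succ) - b (σ i.castSucc)))
    (C : ℝ) (hC : 0 ≤ C) (g g' g'' : ℝ → ℝ)
    (lo hi : ℝ)
    (hlo : lo = Finset.univ.inf' Finset.univ_nonempty b)
    (hhi : hi = Finset.univ.sup' Finset.univ_nonempty b)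
    (hg' : ∀ x ∈ Set.Icc lo hi, HasDerivWithinAt g (g' x) (Set.Icc lo hi) x)
    (hg'' : ∀ x ∈ Set.Icc lo hi, HasDerivWithinAt g' (g'' x) (Set.Icc lo hi) x)
    (hbound : ∀ x ∈ Set.Icc lo hi, |g'' x| ≤ C) :
    ∀ t ∈ Set.Icc (0 : ℝ) 1,
      (Finset.univ.inf' Finset.univ_nonempty (fun j : Fin (M + 1) => g (b j)))
          - C * d ^ 2 / 2 ≤ g (∑ k ∈ Finset.range (M + 1), a k * t ^ k) ∧
      g (∑ k ∈ Finset.range (M + 1), a k * t ^ k)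
          ≤ (Finset.univ.sup' Finset.univ_nonempty (fun j : Fin (M + 1) => g (b j)))
              + C * d ^ 2 / 2 := by
  obtain ⟨n, rfl⟩ : ∃ n, M = n + 1 := ⟨M - 1, by omega⟩
  intro t ht
  have hmem (j : Fin (n + 2)) : b j ∈ Set.Icc lo hi :=
    ⟨hlo ▸ inf'_le _ (mem_univ j), hhi ▸ le_sup' _ (mem_univ j)⟩
  set x := ∑ k ∈ range (n + 1 + 1), a k * t ^ k
  have hx : x ∈ Set.Icc lo hi := sum_mul_pow_mem_of_bernsteinCoeff_mem (convex_Icc lo hi) a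
    (fun j hj => by simpa only [hb, bernsteinCoeff] using hmem ⟨j, by omega⟩) ht
  obtain ⟨i, hpx, hxq⟩ := Fin.exists_castSucc_le_le_succ (fun j => b (σ j))
    (hlo.trans (inf'_univ_eq_of_monotone_comp_perm hσ) ▸ hx.1)
    (hhi.trans (sup'_univ_eq_of_monotone_comp_perm hσ) ▸ hx.2)
  set p := b (σ i.castSucc)
  set q := b (σ i.succ)
  have hgap : q - p ≤ d :=
    hd ▸ le_sup' (fun i : Fin (n + 1) => b (σ i.succ) - b (σ i.castSucc)) (mem_univ i)
  have hslack : C / 2 * ((x - p) * (q - x)) ≤ C * d ^ 2 / 2 := by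
    have hspread : (x - p) * (q - x) ≤ d * d :=
      mul_le_mul (by linarith) (by linarith) (by linarith) (by linarith)
    linear_combination (1 / 2) * mul_le_mul_of_nonneg_left hspread hC
  have hlower := (convex_Icc lo hi).min_sub_le_of_deriv2_le hg' hg''
    (fun y hy => (abs_le.mp (hbound y hy)).2) (hmem _) (hmem _) ⟨hpx, hxq⟩
  have hupper := (convex_Icc lo hi).le_max_add_of_neg_le_deriv2 hg' hg''
    (fun y hy => (abs_le.mp (hbound y hy)).1) (hmem _) (hmem _) ⟨hpx, hxq⟩
  have hinf := le_min (inf'_le (fun j => g (b j)) (mem_univ (σ i.castSucc)))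
    (inf'_le (fun j => g (b j)) (mem_univ (σ i.succ)))
  have hsup := max_le (le_sup' (fun j => g (b j)) (mem_univ (σ i.castSucc)))
    (le_sup' (fun j => g (b j)) (mem_univ (σ i.succ)))
  exact ⟨by linarith, by linarith⟩
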